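/- arXiv:2207.06724 — 2 statements merged into one kernel-verified Lean document; each statement's English description precedes it below -/
import Mathlib

section
/- Calderón–Zygmund dyadic lemma: Let A ⊆ B ⊆ Q₁ be measurable subsets of the unit cube in ℝⁿ and let 0 < δ < 1. Suppose (a) |A| ≤ δ, and (b) whenever Q is a dyadic subcube of Q₁ with |A ∩ Q| > δ|Q|, then the dyadic predecessor Q̃ of Q is contained in B. Then |A| ≤ δ|B|. -/
open MeasureTheory Set Metric Filter Topology
open scoped ENNReal NNReal

/-- The half-open dyadic subcube of generation `m` with index `k` of the unit cube
`Q₁ = [-1/2, 1/2)ⁿ` centered at the origin. Generation `0` with index `0` is `Q₁` itself. -/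
def dyadicCube (n m : ℕ) (k : Fin n → ℕ) : Set (Fin n → ℝ) :=
  {y | ∀ i, -(1 / 2 : ℝ) + k i / 2 ^ m ≤ y i ∧ y i < -(1 / 2 : ℝ) + (k i + 1) / 2 ^ m}

lemma cz_cube_eq (n m : ℕ) (k : Fin n → ℕ) :
    dyadicCube n m k = Set.univ.pi fun i =>
      Set.Ico (-(1/2 : ℝ) + k i / 2 ^ m) (-(1/2 : ℝ) + (k i + 1) / 2 ^ m) := by
  ext y; simp [dyadicCube, Set.mem_pi, Set.mem_Ico]

lemma cz_cube_meas (n m : ℕ) (k : Fin n → ℕ) : MeasurableSet (dyadicCube n m k) := by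
  rw [cz_cube_eq]; exact MeasurableSet.univ_pi fun i => measurableSet_Ico

lemma cz_volume_cube (n m : ℕ) (k : Fin n → ℕ) :
    volume (dyadicCube n m k) = ((2 : ℝ≥0∞) ^ (m * n))⁻¹ := by
  rw [cz_cube_eq, volume_pi_pi]
  have h1 : ∀ i : Fin n, volume (Set.Ico (-(1/2 : ℝ) + k i / 2 ^ m)
      (-(1/2 : ℝ) + (k i + 1) / 2 ^ m)) = ((2 : ℝ≥0∞) ^ m)⁻¹ := by
    intro i
    rw [Real.volume_Ico]
    have : (-(1/2 : ℝ) + (k i + 1) / 2 ^ m) - (-(1/2 : ℝ) + k i / 2 ^ m) = ((2:ℝ) ^ m)⁻¹ := by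
      field_simp
      ring
    rw [this, ENNReal.ofReal_inv_of_pos (by positivity)]
    congr 1
    rw [ENNReal.ofReal_pow (by norm_num)]
    norm_num
  simp only [h1, Finset.prod_const, Finset.card_univ, Fintype.card_fin]
  rw [← ENNReal.inv_pow, ← pow_mul]

noncomputable def czIdx (m : ℕ) (t : ℝ) : ℕ := ⌊(t + 1/2) * 2 ^ m⌋₊

lemma cz_mem_Q1_iff (n : ℕ) (x : Fin n → ℝ) :
    x ∈ dyadicCube n 0 0 ↔ ∀ i, -(1/2 : ℝ) ≤ x i ∧ x i < 1/2 := by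
  constructor <;> intro h i <;> obtain ⟨h1, h2⟩ := h i <;>
    constructor <;> simp only [Pi.zero_apply, Nat.cast_zero, pow_zero] at * <;> linarith

lemma cz_mem_idx (n m : ℕ) (x : Fin n → ℝ) (hx : x ∈ dyadicCube n 0 0) :
    x ∈ dyadicCube n m fun i => czIdx m (x i) := by
  rw [cz_mem_Q1_iff] at hx
  intro i
  obtain ⟨h1, h2⟩ := hx i
  have hp : (0:ℝ) < 2 ^ m := by positivity
  have hs : (0:ℝ) ≤ (x i + 1/2) * 2 ^ m := by nlinarith
  have hlo := Nat.floor_le hs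
  have hhi := Nat.lt_floor_add_one ((x i + 1/2) * 2 ^ m)
  simp only [czIdx]
  constructor
  · have : (⌊(x i + 1/2) * 2 ^ m⌋₊ : ℝ) / 2 ^ m ≤ x i + 1/2 := by
      rw [div_le_iff₀ hp]; linarith
    linarith
  · have : x i + 1/2 < ((⌊(x i + 1/2) * 2 ^ m⌋₊ : ℝ) + 1) / 2 ^ m := by
      rw [lt_div_iff₀ hp]; linarith
    push_cast at this ⊢
    linarith

lemma cz_idx_lt (m : ℕ) (t : ℝ) (h1 : -(1/2:ℝ) ≤ t) (h2 : t < 1/2) :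
    czIdx m t < 2 ^ m := by
  have hp : (0:ℝ) < 2 ^ m := by positivity
  rw [czIdx, Nat.floor_lt (by nlinarith)]
  push_cast
  nlinarith

lemma cz_idx_eq_of_mem (n m : ℕ) (k : Fin n → ℕ) (x : Fin n → ℝ)
    (hx : x ∈ dyadicCube n m k) : ∀ i, k i = czIdx m (x i) := by
  intro i
  obtain ⟨h1, h2⟩ := hx i
  have hp : (0:ℝ) < 2 ^ m := by positivity
  have hk : (k i : ℝ) ≤ (x i + 1/2) * 2 ^ m := by
    have : (k i : ℝ) / 2 ^ m ≤ x i + 1/2 := by linarith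
    rw [div_le_iff₀ hp] at this; linarith
  have hk2 : (x i + 1/2) * 2 ^ m < (k i : ℝ) + 1 := by
    have : x i + 1/2 < ((k i : ℝ) + 1) / 2 ^ m := by linarith
    rw [lt_div_iff₀ hp] at this; linarith
  symm
  rw [czIdx, Nat.floor_eq_iff (le_trans (Nat.cast_nonneg _) hk)]
  exact ⟨hk, hk2⟩

lemma cz_mem_Q1_of_mem (n m : ℕ) (k : Fin n → ℕ) (hk : ∀ i, k i < 2 ^ m)
    (x : Fin n → ℝ) (hx : x ∈ dyadicCube n m k) : x ∈ dyadicCube n 0 0 := by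
  rw [cz_mem_Q1_iff]
  intro i
  obtain ⟨h1, h2⟩ := hx i
  have hp : (0:ℝ) < 2 ^ m := by positivity
  have hd : (0:ℝ) ≤ (k i : ℝ) / 2 ^ m := by positivity
  have hu : ((k i : ℝ) + 1) / 2 ^ m ≤ 1 := by
    rw [div_le_one hp]
    have : (k i : ℝ) + 1 ≤ (2:ℝ) ^ m := by
      have := hk i
      push_cast
      exact_mod_cast Nat.succ_le_of_lt this
    linarith
  constructor <;> linarith

lemma cz_idx_div (m : ℕ) (t : ℝ) (ht : -(1/2:ℝ) ≤ t) :
    czIdx (m + 1) t / 2 = czIdx m t := by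
  have h0 : (t + 1/2) * 2 ^ (m+1) / (2:ℕ) = (t + 1/2) * 2 ^ m := by
    push_cast; rw [pow_succ]; ring
  rw [czIdx, czIdx, ← Nat.floor_div_natCast, h0]

lemma cz_succ_subset (n m : ℕ) (k : Fin n → ℕ) :
    dyadicCube n (m + 1) k ⊆ dyadicCube n m fun i => k i / 2 := by
  intro y hy i
  obtain ⟨h1, h2⟩ := hy i
  have hp : (0:ℝ) < 2 ^ m := by positivity
  have e1 : (2:ℝ) ^ (m+1) = 2 ^ m * 2 := by rw [pow_succ]
  have n1 : 2 * (k i / 2) ≤ k i := by omega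
  have n2 : k i + 1 ≤ 2 * (k i / 2) + 2 := by omega
  have c1 : ((k i / 2 : ℕ) : ℝ) / 2 ^ m ≤ (k i : ℝ) / 2 ^ (m+1) := by
    rw [div_le_div_iff₀ hp (by positivity), e1]
    have : (2:ℝ) * ((k i / 2 : ℕ) : ℝ) ≤ (k i : ℝ) := by exact_mod_cast n1
    nlinarith
  have c2 : ((k i : ℝ) + 1) / 2 ^ (m+1) ≤ (((k i / 2 : ℕ) : ℝ) + 1) / 2 ^ m := by
    rw [div_le_div_iff₀ (by positivity) hp, e1]
    have : (k i : ℝ) + 1 ≤ 2 * ((k i / 2 : ℕ) : ℝ) + 2 := by exact_mod_cast n2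
    nlinarith
  exact ⟨by linarith, by linarith⟩

lemma cz_Q_mono (n : ℕ) (x : Fin n → ℝ) (hx : x ∈ dyadicCube n 0 0) {g m : ℕ} (hgm : g ≤ m) :
    (dyadicCube n m fun i => czIdx m (x i)) ⊆ dyadicCube n g fun i => czIdx g (x i) := by
  induction m, hgm using Nat.le_induction with
  | base => exact subset_rfl
  | succ m hm ih =>
    refine subset_trans ?_ ih
    have : (fun i => czIdx m (x i)) = fun i => czIdx (m+1) (x i) / 2 := by
      funext i
      rw [cz_idx_div m (x i) ((cz_mem_Q1_iff n x).mp hx i).1]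
    rw [this]
    exact cz_succ_subset n m _

lemma cz_nested (n : ℕ) {m m' : ℕ} {k k' : Fin n → ℕ} (hmm' : m ≤ m')
    (hk : ∀ i, k i < 2 ^ m) (hk' : ∀ i, k' i < 2 ^ m') (x : Fin n → ℝ)
    (hx : x ∈ dyadicCube n m k) (hx' : x ∈ dyadicCube n m' k') :
    dyadicCube n m' k' ⊆ dyadicCube n m k := by
  have hQ1 : x ∈ dyadicCube n 0 0 := cz_mem_Q1_of_mem n m k hk x hx
  have e1 : k = fun i => czIdx m (x i) := funext (cz_idx_eq_of_mem n m k x hx)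
  have e2 : k' = fun i => czIdx m' (x i) := funext (cz_idx_eq_of_mem n m' k' x hx')
  rw [e1, e2]
  exact cz_Q_mono n x hQ1 hmm'

lemma cz_nonempty (n m : ℕ) (k : Fin n → ℕ) : (dyadicCube n m k).Nonempty := by
  refine ⟨fun i => -(1/2 : ℝ) + k i / 2 ^ m, fun i => ⟨le_refl _, ?_⟩⟩
  have hp : (0:ℝ) < 2 ^ m := by positivity
  have : (k i : ℝ) / 2 ^ m < ((k i : ℝ) + 1) / 2 ^ m := by
    rw [div_lt_div_iff₀ hp hp]; nlinarith
  linarith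

lemma cz_gen_le (n : ℕ) (hn : 1 ≤ n) {m m' : ℕ} {k k' : Fin n → ℕ}
    (h : dyadicCube n m' k' ⊆ dyadicCube n m k) : m ≤ m' := by
  have hv := measure_mono (μ := volume) h
  rw [cz_volume_cube, cz_volume_cube] at hv
  have h2 : (2:ℝ≥0∞) ^ (m * n) ≤ 2 ^ (m' * n) := by
    rw [← ENNReal.inv_le_inv]
    exact hv
  have h2' : (2:ℕ) ^ (m * n) ≤ 2 ^ (m' * n) := by
    have := h2
    rw [show ((2:ℝ≥0∞)) = ((2:ℕ):ℝ≥0∞) by norm_num, ← Nat.cast_pow, ← Nat.cast_pow,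
      Nat.cast_le] at this
    exact this
  have h3 : m * n ≤ m' * n := (Nat.pow_le_pow_iff_right (by norm_num)).mp h2'
  exact Nat.le_of_mul_le_mul_right h3 (by omega)

lemma cz_cube_eq_iff (n : ℕ) (hn : 1 ≤ n) {m m' : ℕ} {k k' : Fin n → ℕ}
    (h : dyadicCube n m k = dyadicCube n m' k') : m = m' ∧ k = k' := by
  have h1 : m = m' :=
    le_antisymm (cz_gen_le n hn h.ge.subset) (cz_gen_le n hn h.le.subset)
  subst h1
  obtain ⟨x, hx⟩ := cz_nonempty n m k
  have hx' : x ∈ dyadicCube n m k' := h ▸ hx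
  refine ⟨rfl, funext fun i => ?_⟩
  rw [cz_idx_eq_of_mem n m k x hx i, cz_idx_eq_of_mem n m k' x hx' i]

def czCl (n m : ℕ) (k : Fin n → ℕ) : Set (Fin n → ℝ) :=
  Set.univ.pi fun i => Set.Icc (-(1/2 : ℝ) + k i / 2 ^ m) (-(1/2 : ℝ) + (k i + 1) / 2 ^ m)

lemma cz_cl_closed (n m : ℕ) (k : Fin n → ℕ) : IsClosed (czCl n m k) :=
  isClosed_set_pi fun i _ => isClosed_Icc

lemma cz_cube_subset_cl (n m : ℕ) (k : Fin n → ℕ) : dyadicCube n m k ⊆ czCl n m k := by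
  rw [cz_cube_eq]
  exact Set.pi_mono fun i _ => Set.Ico_subset_Icc_self

lemma cz_volume_cl (n m : ℕ) (k : Fin n → ℕ) :
    volume (czCl n m k) = volume (dyadicCube n m k) := by
  rw [cz_cube_eq, czCl, volume_pi_pi, volume_pi_pi]
  congr 1
  funext i
  rw [Real.volume_Icc, Real.volume_Ico]

lemma cz_vol_inter_cl (n m : ℕ) (k : Fin n → ℕ) (A : Set (Fin n → ℝ)) :
    volume (A ∩ czCl n m k) = volume (A ∩ dyadicCube n m k) := by
  refine le_antisymm ?_ (measure_mono (Set.inter_subset_inter_right _ (cz_cube_subset_cl n m k)))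
  have hdiff : volume (czCl n m k \ dyadicCube n m k) = 0 := by
    have h1 := measure_diff (cz_cube_subset_cl n m k) (cz_cube_meas n m k).nullMeasurableSet
      (by rw [cz_volume_cube]; exact ENNReal.inv_ne_top.mpr (by positivity))
    rw [h1, cz_volume_cl, tsub_self]
  calc volume (A ∩ czCl n m k)
      ≤ volume (A ∩ dyadicCube n m k ∪ (czCl n m k \ dyadicCube n m k)) := by
        apply measure_mono; intro y hy
        by_cases hyd : y ∈ dyadicCube n m k
        · exact Or.inl ⟨hy.1, hyd⟩
        · exact Or.inr ⟨hy.2, hyd⟩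
    _ ≤ volume (A ∩ dyadicCube n m k) + volume (czCl n m k \ dyadicCube n m k) :=
        measure_union_le _ _
    _ = volume (A ∩ dyadicCube n m k) := by rw [hdiff, add_zero]

lemma cz_cl_interior_nonempty (n m : ℕ) (k : Fin n → ℕ) :
    (interior (czCl n m k)).Nonempty := by
  have hsub : (Set.univ.pi fun i : Fin n =>
      Set.Ioo (-(1/2 : ℝ) + k i / 2 ^ m) (-(1/2 : ℝ) + (k i + 1) / 2 ^ m)) ⊆
      interior (czCl n m k) := by
    apply interior_maximal
    · exact Set.pi_mono fun i _ => Set.Ioo_subset_Icc_self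
    · exact isOpen_set_pi Set.finite_univ fun i _ => isOpen_Ioo
  refine Set.Nonempty.mono hsub ?_
  refine ⟨fun i => -(1/2 : ℝ) + ((k i : ℝ) + 1/2) / 2 ^ m, fun i _ => ?_⟩
  have hp : (0:ℝ) < 2 ^ m := by positivity
  constructor
  · rw [add_lt_add_iff_left, div_lt_div_iff₀ hp hp]; nlinarith
  · rw [add_lt_add_iff_left, div_lt_div_iff₀ hp hp]; nlinarith

lemma cz_cl_subset_ball (n m : ℕ) (k : Fin n → ℕ) (x : Fin n → ℝ)
    (hx : x ∈ dyadicCube n m k) : czCl n m k ⊆ closedBall x (((2:ℝ) ^ m)⁻¹) := by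
  intro y hy
  have hp : (0:ℝ) < 2 ^ m := by positivity
  rw [mem_closedBall, dist_pi_le_iff (by positivity)]
  intro i
  obtain ⟨h1, h2⟩ := hx i
  obtain ⟨h3, h4⟩ := hy i (Set.mem_univ i)
  rw [Real.dist_eq, abs_sub_le_iff]
  have key : ((k i : ℝ) + 1) / 2 ^ m - (k i : ℝ) / 2 ^ m = ((2:ℝ) ^ m)⁻¹ := by
    field_simp
    ring
  constructor <;> nlinarith [key]

lemma cz_six (n : ℕ) : ENNReal.ofReal ((6:ℝ)^n) ≤ (((6:ℝ≥0)^n : ℝ≥0) : ℝ≥0∞) := by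
  rw [ENNReal.ofReal_pow (by norm_num), ENNReal.coe_pow]
  gcongr
  simp [ENNReal.ofReal_ofNat]

lemma cz_six3 (n : ℕ) : ENNReal.ofReal ((3:ℝ)^n) ≤ (((6:ℝ≥0)^n : ℝ≥0) : ℝ≥0∞) := by
  rw [ENNReal.ofReal_pow (by norm_num), ENNReal.coe_pow]
  gcongr
  norm_num

noncomputable def czVF (n : ℕ) : VitaliFamily (volume : Measure (Fin n → ℝ)) :=
  Vitali.vitaliFamily volume (6 ^ n) (by
    intro x
    apply Filter.Eventually.frequently
    filter_upwards [self_mem_nhdsWithin] with r (hr : 0 < r)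
    rw [Real.volume_pi_closedBall _ (by linarith : (0:ℝ) ≤ 3 * r),
      Real.volume_pi_closedBall _ hr.le]
    have e1 : (2 * (3 * r)) ^ n = 3 ^ n * (2 * r) ^ n := by
      rw [← mul_pow]; ring_nf
    rw [Fintype.card_fin, e1, ENNReal.ofReal_mul (by positivity)]
    exact mul_le_mul_left (cz_six3 n) _)

lemma cz_cl_mem_setsAt (n m : ℕ) (k : Fin n → ℕ) (x : Fin n → ℝ)
    (hx : x ∈ dyadicCube n m k) : czCl n m k ∈ (czVF n).setsAt x := by
  refine ⟨cz_cl_closed n m k, cz_cl_interior_nonempty n m k, ((2:ℝ) ^ m)⁻¹,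
    cz_cl_subset_ball n m k x hx, ?_⟩
  rw [Real.volume_pi_closedBall _ (by positivity), Fintype.card_fin,
    cz_volume_cl, cz_volume_cube]
  have e1 : (2 * (3 * ((2:ℝ) ^ m)⁻¹)) ^ n = 6 ^ n * (((2:ℝ)^m)⁻¹) ^ n := by
    rw [← mul_pow]; ring_nf
  rw [e1, ENNReal.ofReal_mul (by positivity)]
  have e2 : ENNReal.ofReal ((((2:ℝ)^m)⁻¹) ^ n) = ((2:ℝ≥0∞) ^ (m * n))⁻¹ := by
    rw [ENNReal.ofReal_pow (by positivity), ENNReal.ofReal_inv_of_pos (by positivity),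
      ENNReal.ofReal_pow (by norm_num)]
    norm_num
    rw [← ENNReal.inv_pow, ← pow_mul]
  rw [e2]
  exact mul_le_mul_left (cz_six n) _

lemma cz_ae_density (n : ℕ) (A : Set (Fin n → ℝ)) (hA : MeasurableSet A)
    (hAQ : A ⊆ dyadicCube n 0 0) :
    ∀ᵐ x ∂(volume.restrict A), Tendsto (fun m =>
      volume (A ∩ dyadicCube n m fun i => czIdx m (x i)) /
        volume (dyadicCube n m fun i => czIdx m (x i))) atTop (𝓝 1) := by
  filter_upwards [(czVF n).ae_tendsto_measure_inter_div A, ae_restrict_mem hA] with x hx hxA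
  have hxQ : x ∈ dyadicCube n 0 0 := hAQ hxA
  have hmem : ∀ m, x ∈ dyadicCube n m fun i => czIdx m (x i) := fun m => cz_mem_idx n m x hxQ
  have hw : Tendsto (fun m => czCl n m fun i => czIdx m (x i)) atTop ((czVF n).filterAt x) := by
    rw [VitaliFamily.tendsto_filterAt_iff]
    constructor
    · exact Filter.Eventually.of_forall fun m => cz_cl_mem_setsAt n m _ x (hmem m)
    · intro ε hε
      have h2 : Tendsto (fun m : ℕ => ((2:ℝ) ^ m)⁻¹) atTop (𝓝 0) :=
        tendsto_inv_atTop_zero.comp (tendsto_pow_atTop_atTop_of_one_lt one_lt_two)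
      filter_upwards [h2.eventually_le_const hε] with m hm
      exact (cz_cl_subset_ball n m _ x (hmem m)).trans (closedBall_subset_closedBall hm)
  have := hx.comp hw
  refine this.congr fun m => ?_
  simp only [Function.comp_apply]
  rw [cz_vol_inter_cl, cz_volume_cl]

def czS (n : ℕ) (A B : Set (Fin n → ℝ)) (δ : ℝ) : Set (ℕ × (Fin n → ℕ)) :=
  {c | (∀ i, c.2 i < 2 ^ c.1) ∧
    volume (A ∩ dyadicCube n c.1 c.2) ≤ ENNReal.ofReal δ * volume (dyadicCube n c.1 c.2) ∧
    dyadicCube n c.1 c.2 ⊆ B}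

def czM (n : ℕ) (A B : Set (Fin n → ℝ)) (δ : ℝ) : Set (ℕ × (Fin n → ℕ)) :=
  {c | c ∈ czS n A B δ ∧ ∀ c' ∈ czS n A B δ,
    dyadicCube n c.1 c.2 ⊆ dyadicCube n c'.1 c'.2 → c' = c}

lemma cz_eq_of_subset_same_gen (n : ℕ) (hn : 1 ≤ n) {c c' : ℕ × (Fin n → ℕ)}
    (hgen : c'.1 = c.1) (h : dyadicCube n c.1 c.2 ⊆ dyadicCube n c'.1 c'.2) : c' = c := by
  obtain ⟨x, hx⟩ := cz_nonempty n c.1 c.2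
  have hx' : x ∈ dyadicCube n c'.1 c'.2 := h hx
  refine Prod.ext hgen ?_
  have e1 := funext (cz_idx_eq_of_mem n c.1 c.2 x hx)
  have e2 := funext (cz_idx_eq_of_mem n c'.1 c'.2 x hx')
  rw [hgen] at e2
  rw [e1, e2]

lemma cz_max (n : ℕ) (hn : 1 ≤ n) (A B : Set (Fin n → ℝ)) (δ : ℝ) :
    ∀ c ∈ czS n A B δ, ∃ c' ∈ czM n A B δ,
      dyadicCube n c.1 c.2 ⊆ dyadicCube n c'.1 c'.2 := by
  have key : ∀ g : ℕ, ∀ c ∈ czS n A B δ, c.1 = g → ∃ c' ∈ czM n A B δ,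
      dyadicCube n c.1 c.2 ⊆ dyadicCube n c'.1 c'.2 := by
    intro g
    induction g using Nat.strong_induction_on with
    | _ g ih =>
      intro c hc hcg
      by_cases hM : c ∈ czM n A B δ
      · exact ⟨c, hM, subset_rfl⟩
      · have : ∃ c' ∈ czS n A B δ,
            dyadicCube n c.1 c.2 ⊆ dyadicCube n c'.1 c'.2 ∧ c' ≠ c := by
          by_contra hcon
          push_neg at hcon
          exact hM ⟨hc, hcon⟩
        obtain ⟨c', hc', hsub, hne⟩ := this
        have hle : c'.1 ≤ c.1 := cz_gen_le n hn hsub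
        have hlt : c'.1 < g := by
          rcases lt_or_eq_of_le hle with h | h
          · omega
          · exact absurd (cz_eq_of_subset_same_gen n hn h hsub) hne
        obtain ⟨c'', hc'', hsub'⟩ := ih c'.1 hlt c' hc' rfl
        exact ⟨c'', hc'', hsub.trans hsub'⟩
  exact fun c hc => key c.1 c hc rfl

lemma cz_M_disjoint (n : ℕ) (hn : 1 ≤ n) (A B : Set (Fin n → ℝ)) (δ : ℝ) :
    ∀ c ∈ czM n A B δ, ∀ c' ∈ czM n A B δ, c ≠ c' →
      Disjoint (dyadicCube n c.1 c.2) (dyadicCube n c'.1 c'.2) := by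
  have key : ∀ c ∈ czM n A B δ, ∀ c' ∈ czM n A B δ, c.1 ≤ c'.1 → c ≠ c' →
      Disjoint (dyadicCube n c.1 c.2) (dyadicCube n c'.1 c'.2) := by
    intro c hc c' hc' hle hne
    rw [Set.disjoint_left]
    intro x hx hx'
    have hsub := cz_nested n hle hc.1.1 hc'.1.1 x hx hx'
    exact hne (hc'.2 c hc.1 hsub)
  intro c hc c' hc' hne
  rcases le_total c.1 c'.1 with h | h
  · exact key c hc c' hc' h hne
  · exact (key c' hc' c hc h hne.symm).symm

lemma cz_stop (n : ℕ) (A B : Set (Fin n → ℝ)) (δ : ℝ) (hδ1 : δ < 1)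
    (hAQ : A ⊆ dyadicCube n 0 0) (ha : volume A ≤ ENNReal.ofReal δ)
    (hb : ∀ (m : ℕ) (k : Fin n → ℕ), 1 ≤ m → (∀ i, k i < 2 ^ m) →
      ENNReal.ofReal δ * volume (dyadicCube n m k) < volume (A ∩ dyadicCube n m k) →
      dyadicCube n (m - 1) (fun i => k i / 2) ⊆ B)
    (x : Fin n → ℝ) (hxA : x ∈ A)
    (hT : Tendsto (fun m =>
      volume (A ∩ dyadicCube n m fun i => czIdx m (x i)) /
        volume (dyadicCube n m fun i => czIdx m (x i))) atTop (𝓝 1)) :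
    ∃ c ∈ czS n A B δ, x ∈ dyadicCube n c.1 c.2 := by
  classical
  have hxQ := hAQ hxA
  have hxb := (cz_mem_Q1_iff n x).mp hxQ
  set P : ℕ → Prop := fun m =>
    ENNReal.ofReal δ * volume (dyadicCube n m fun i => czIdx m (x i)) <
      volume (A ∩ dyadicCube n m fun i => czIdx m (x i)) with hP
  have hv0 : ∀ m, volume (dyadicCube n m fun i => czIdx m (x i)) ≠ 0 := by
    intro m; rw [cz_volume_cube]
    exact ENNReal.inv_ne_zero.mpr (ENNReal.pow_ne_top (by norm_num))
  have hvt : ∀ m, volume (dyadicCube n m fun i => czIdx m (x i)) ≠ ⊤ := by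
    intro m; rw [cz_volume_cube]
    exact ENNReal.inv_ne_top.mpr (by positivity)
  have hex : ∃ m, P m := by
    have h1 : ENNReal.ofReal δ < 1 := ENNReal.ofReal_lt_one.mpr hδ1
    obtain ⟨m, hm⟩ := (hT.eventually_const_lt h1).exists
    refine ⟨m, ?_⟩
    rw [ENNReal.lt_div_iff_mul_lt (Or.inl (hv0 m)) (Or.inl (hvt m))] at hm
    exact hm
  have hP0 : P (Nat.find hex) := Nat.find_spec hex
  have hm₀ : 1 ≤ Nat.find hex := by
    rcases Nat.eq_zero_or_pos (Nat.find hex) with h | h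
    · exfalso
      have h2 := hP0
      rw [h, hP] at h2
      simp only [cz_volume_cube, Nat.zero_mul, pow_zero, inv_one, mul_one] at h2
      exact absurd (le_trans (measure_mono Set.inter_subset_left) ha) (not_le.mpr h2)
    · omega
  set m₀ := Nat.find hex
  have hnP : ¬ P (m₀ - 1) := Nat.find_min hex (by omega)
  have e : (fun i => czIdx m₀ (x i) / 2) = fun i => czIdx (m₀ - 1) (x i) := by
    funext i
    have h3 := cz_idx_div (m₀ - 1) (x i) (hxb i).1
    rw [Nat.sub_add_cancel hm₀] at h3
    exact h3
  refine ⟨(m₀ - 1, fun i => czIdx m₀ (x i) / 2), ⟨?_, ?_, ?_⟩, ?_⟩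
  · intro i
    show czIdx m₀ (x i) / 2 < 2 ^ (m₀ - 1)
    rw [congrFun e i]
    exact cz_idx_lt _ _ (hxb i).1 (hxb i).2
  · simp only [e]
    exact not_lt.mp hnP
  · exact hb m₀ (fun i => czIdx m₀ (x i)) hm₀
      (fun i => cz_idx_lt _ _ (hxb i).1 (hxb i).2) hP0
  · simp only [e]
    exact cz_mem_idx n (m₀ - 1) x hxQ

theorem stmt_5 (n : ℕ) (hn : 1 ≤ n) (A B : Set (Fin n → ℝ))
    (hAmeas : MeasurableSet A) (hBmeas : MeasurableSet B)
    (hAB : A ⊆ B) (hBQ : B ⊆ dyadicCube n 0 0)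
    (δ : ℝ) (hδ0 : 0 < δ) (hδ1 : δ < 1)
    (ha : volume A ≤ ENNReal.ofReal δ)
    (hb : ∀ (m : ℕ) (k : Fin n → ℕ), 1 ≤ m → (∀ i, k i < 2 ^ m) →
      ENNReal.ofReal δ * volume (dyadicCube n m k) < volume (A ∩ dyadicCube n m k) →
      dyadicCube n (m - 1) (fun i => k i / 2) ⊆ B) :
    volume A ≤ ENNReal.ofReal δ * volume B := by
  classical
  have hAQ : A ⊆ dyadicCube n 0 0 := fun x hx => hBQ (hAB hx)
  set U : Set (Fin n → ℝ) := ⋃ c ∈ czM n A B δ, dyadicCube n c.1 c.2 with hU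
  have hMcount : (czM n A B δ).Countable := Set.to_countable _
  have hUmeas : MeasurableSet U :=
    MeasurableSet.biUnion hMcount fun c _ => cz_cube_meas n c.1 c.2
  have hUB : U ⊆ B := by
    intro y hy
    simp only [hU, Set.mem_iUnion] at hy
    obtain ⟨c, hc, hyc⟩ := hy
    exact hc.1.2.2 hyc
  have hcover : volume (A \ U) = 0 := by
    have hae : ∀ᵐ x ∂(volume.restrict A), x ∈ U := by
      filter_upwards [cz_ae_density n A hAmeas hAQ, ae_restrict_mem hAmeas] with x hT hxA
      obtain ⟨c, hc, hxc⟩ := cz_stop n A B δ hδ1 hAQ ha hb x hxA hT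
      obtain ⟨c', hc', hsub⟩ := cz_max n hn A B δ c hc
      exact Set.mem_biUnion hc' (hsub hxc)
    have h0 : (volume.restrict A) Uᶜ = 0 := by
      rw [ae_iff] at hae
      exact hae
    rw [Measure.restrict_apply hUmeas.compl] at h0
    rw [Set.diff_eq, Set.inter_comm]
    exact h0
  have hdisjM : ∀ c ∈ czM n A B δ, ∀ c' ∈ czM n A B δ, c ≠ c' →
      Disjoint (dyadicCube n c.1 c.2) (dyadicCube n c'.1 c'.2) :=
    cz_M_disjoint n hn A B δ
  have hpd1 : (czM n A B δ).PairwiseDisjoint (fun c => A ∩ dyadicCube n c.1 c.2) := by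
    intro c hc c' hc' hne
    exact (hdisjM c hc c' hc' hne).mono Set.inter_subset_right Set.inter_subset_right
  have hpd2 : (czM n A B δ).PairwiseDisjoint (fun c => dyadicCube n c.1 c.2) := by
    intro c hc c' hc' hne
    exact hdisjM c hc c' hc' hne
  have hAU : volume (A ∩ U) = ∑' c : czM n A B δ, volume (A ∩ dyadicCube n c.1.1 c.1.2) := by
    rw [hU, Set.inter_iUnion₂]
    exact measure_biUnion hMcount hpd1 fun c _ => hAmeas.inter (cz_cube_meas n c.1 c.2)
  have hUsum : volume U = ∑' c : czM n A B δ, volume (dyadicCube n c.1.1 c.1.2) := by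
    rw [hU]
    exact measure_biUnion hMcount hpd2 fun c _ => cz_cube_meas n c.1 c.2
  calc volume A ≤ volume (A ∩ U) + volume (A \ U) := measure_le_inter_add_diff _ _ _
    _ = volume (A ∩ U) := by rw [hcover, add_zero]
    _ = ∑' c : czM n A B δ, volume (A ∩ dyadicCube n c.1.1 c.1.2) := hAU
    _ ≤ ∑' c : czM n A B δ, ENNReal.ofReal δ * volume (dyadicCube n c.1.1 c.1.2) :=
        ENNReal.tsum_le_tsum fun c => c.2.1.2.1
    _ = ENNReal.ofReal δ * ∑' c : czM n A B δ, volume (dyadicCube n c.1.1 c.1.2) :=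
        ENNReal.tsum_mul_left
    _ = ENNReal.ofReal δ * volume U := by rw [hUsum]
    _ ≤ ENNReal.ofReal δ * volume B := mul_le_mul_right (measure_mono hUB) _
end

section
/- Let 0 < μ, ε with με < 1 and let M > 1. Suppose v : ℝⁿ → ℝ is a nonnegative measurable function on the unit cube Q₁ such that for every dyadic subcube Q = Q_{2^{-j}}(x*) of Q₁ and every k ≥ 1, if the predecessor Q̃ of Q contains a point x̃ with v(x̃) ≤ M^{k-1}, then |{v ≤ M^k} ∩ Q| > με·|Q|. If moreover |{v ≤ M} ∩ Q₁| > με, then |{v > M^k} ∩ Q₁| ≤ (1-με)^k for all k ≥ 1. -/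
open MeasureTheory

namespace CZAux
open Metric Set Filter

variable {n : ℕ}

noncomputable def idx (n m : ℕ) (x : Fin n → ℝ) : Fin n → ℕ :=
  fun i => ⌊(x i + 1 / 2) * 2 ^ m⌋₊

lemma cube_eq_pi (m : ℕ) (k : Fin n → ℕ) :
    dyadicCube n m k =
      Set.pi Set.univ
        (fun i => Ico (-(1 / 2 : ℝ) + k i / 2 ^ m) (-(1 / 2 : ℝ) + (k i + 1) / 2 ^ m)) := by
  ext y; simp [dyadicCube, Set.mem_pi, Ico]

lemma measurableSet_cube (m : ℕ) (k : Fin n → ℕ) : MeasurableSet (dyadicCube n m k) := by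
  rw [cube_eq_pi]
  exact MeasurableSet.univ_pi fun i => measurableSet_Ico

lemma volume_cube (m : ℕ) (k : Fin n → ℕ) :
    volume (dyadicCube n m k) = ENNReal.ofReal ((1 : ℝ) / 2 ^ m) ^ n := by
  rw [cube_eq_pi, volume_pi_pi]
  have : ∀ i : Fin n,
      volume (Ico (-(1 / 2 : ℝ) + k i / 2 ^ m) (-(1 / 2 : ℝ) + (k i + 1) / 2 ^ m)) =
        ENNReal.ofReal ((1 : ℝ) / 2 ^ m) := by
    intro i
    rw [Real.volume_Ico]
    congr 1
    ring
  rw [Finset.prod_congr rfl (fun i _ => this i), Finset.prod_const]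
  simp

lemma volume_cube_ne_zero (m : ℕ) (k : Fin n → ℕ) : volume (dyadicCube n m k) ≠ 0 := by
  rw [volume_cube]
  positivity

lemma volume_cube_ne_top (m : ℕ) (k : Fin n → ℕ) : volume (dyadicCube n m k) ≠ ⊤ := by
  rw [volume_cube]
  exact ENNReal.pow_ne_top ENNReal.ofReal_ne_top

lemma mem_Q1 {x : Fin n → ℝ} (hx : x ∈ dyadicCube n 0 0) (i : Fin n) :
    0 ≤ x i + 1 / 2 ∧ x i + 1 / 2 < 1 := by
  have := hx i
  norm_num at this
  constructor <;> linarith [this.1, this.2]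

lemma mem_cube_idx {x : Fin n → ℝ} (hx : x ∈ dyadicCube n 0 0) (m : ℕ) :
    x ∈ dyadicCube n m (idx n m x) := by
  intro i
  obtain ⟨h0, h1⟩ := mem_Q1 hx i
  have hp : (0:ℝ) < 2 ^ m := by positivity
  have hfl : (⌊(x i + 1 / 2) * 2 ^ m⌋₊ : ℝ) ≤ (x i + 1 / 2) * 2 ^ m :=
    Nat.floor_le (by positivity)
  have hfu : (x i + 1 / 2) * 2 ^ m < ⌊(x i + 1 / 2) * 2 ^ m⌋₊ + 1 :=
    Nat.lt_floor_add_one _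
  constructor
  · rw [← sub_nonneg]
    have : (idx n m x i : ℝ) / 2 ^ m ≤ x i + 1 / 2 := by
      rw [div_le_iff₀ hp]; exact hfl
    simp only [idx] at this ⊢
    linarith
  · have : x i + 1 / 2 < ((idx n m x i : ℝ) + 1) / 2 ^ m := by
      rw [lt_div_iff₀ hp]; exact hfu
    simp only [idx] at this ⊢
    linarith

lemma idx_lt {x : Fin n → ℝ} (hx : x ∈ dyadicCube n 0 0) (m : ℕ) (i : Fin n) :
    idx n m x i < 2 ^ m := by
  obtain ⟨h0, h1⟩ := mem_Q1 hx i
  have : (x i + 1 / 2) * 2 ^ m < 2 ^ m := by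
    have hp : (0:ℝ) < 2 ^ m := by positivity
    nlinarith
  rw [idx]
  rw [Nat.floor_lt (by positivity : (0:ℝ) ≤ (x i + 1 / 2) * 2 ^ m)]
  push_cast
  linarith

lemma idx_unique {x : Fin n → ℝ} {m : ℕ} {k : Fin n → ℕ} (hx : x ∈ dyadicCube n m k) :
    k = idx n m x := by
  funext i
  obtain ⟨hl, hu⟩ := hx i
  have hp : (0:ℝ) < 2 ^ m := by positivity
  have h1 : (k i : ℝ) ≤ (x i + 1 / 2) * 2 ^ m := by
    rw [← div_le_iff₀ hp]; linarith
  have h2 : (x i + 1 / 2) * 2 ^ m < k i + 1 := by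
    rw [← lt_div_iff₀ hp]; push_cast; linarith
  symm
  rw [idx]
  rw [Nat.floor_eq_iff (le_trans (Nat.cast_nonneg _) h1)]
  exact ⟨h1, by push_cast; linarith⟩


variable {n : ℕ}

lemma parent_subset (m : ℕ) (k : Fin n → ℕ) :
    dyadicCube n (m + 1) k ⊆ dyadicCube n m (fun i => k i / 2) := by
  intro y hy i
  obtain ⟨hl, hu⟩ := hy i
  have hp : (0:ℝ) < 2 ^ m := by positivity
  have h1 : 2 * (k i / 2) ≤ k i := by omega
  have h2 : k i + 1 ≤ 2 * (k i / 2) + 2 := by omega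
  have c1 : ((k i / 2 : ℕ) : ℝ) / 2 ^ m ≤ (k i : ℝ) / 2 ^ (m + 1) := by
    rw [div_le_div_iff₀ hp (by positivity)]
    push_cast
    have : ((k i / 2 : ℕ) : ℝ) * 2 ≤ (k i : ℝ) := by exact_mod_cast by omega
    calc ((k i / 2 : ℕ) : ℝ) * 2 ^ (m + 1) = (((k i / 2 : ℕ) : ℝ) * 2) * 2 ^ m := by ring
    _ ≤ (k i : ℝ) * 2 ^ m := by nlinarith
  have c2 : ((k i : ℝ) + 1) / 2 ^ (m + 1) ≤ (((k i / 2 : ℕ) : ℝ) + 1) / 2 ^ m := by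
    rw [div_le_div_iff₀ (by positivity) hp]
    have : (k i : ℝ) + 1 ≤ (((k i / 2 : ℕ) : ℝ) + 1) * 2 := by exact_mod_cast by omega
    calc ((k i : ℝ) + 1) * 2 ^ m ≤ ((((k i / 2 : ℕ) : ℝ) + 1) * 2) * 2 ^ m := by nlinarith
    _ = (((k i / 2 : ℕ) : ℝ) + 1) * 2 ^ (m + 1) := by ring
  exact ⟨by linarith, by linarith⟩

lemma subset_Q1 {m : ℕ} {k : Fin n → ℕ} (hk : ∀ i, k i < 2 ^ m) :
    dyadicCube n m k ⊆ dyadicCube n 0 0 := by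
  intro y hy i
  obtain ⟨hl, hu⟩ := hy i
  have hp : (0:ℝ) < 2 ^ m := by positivity
  have h1 : (0:ℝ) ≤ (k i : ℝ) / 2 ^ m := by positivity
  have h2 : ((k i : ℝ) + 1) / 2 ^ m ≤ 1 := by
    rw [div_le_one hp]
    exact_mod_cast hk i
  norm_num
  constructor <;> linarith

lemma cube_nonempty (m : ℕ) (k : Fin n → ℕ) : (dyadicCube n m k).Nonempty := by
  refine ⟨fun i => -(1 / 2 : ℝ) + k i / 2 ^ m, fun i => ⟨le_refl _, ?_⟩⟩
  have hp : (0:ℝ) < 2 ^ m := by positivity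
  have : (k i : ℝ) / 2 ^ m < ((k i : ℝ) + 1) / 2 ^ m := by
    rw [div_lt_div_iff₀ hp hp]; nlinarith
  linarith

lemma cube_eq_of_mem {x : Fin n → ℝ} {m : ℕ} {k k' : Fin n → ℕ}
    (h : x ∈ dyadicCube n m k) (h' : x ∈ dyadicCube n m k') :
    dyadicCube n m k = dyadicCube n m k' := by
  rw [idx_unique h, idx_unique h']

lemma subset_of_mem_aux : ∀ (d m : ℕ) (k k' : Fin n → ℕ) (x : Fin n → ℝ),
    x ∈ dyadicCube n (m + d) k → x ∈ dyadicCube n m k' →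
    dyadicCube n (m + d) k ⊆ dyadicCube n m k' := by
  intro d
  induction d with
  | zero => intro m k k' x h h'; exact (cube_eq_of_mem h h').le
  | succ d ih =>
    intro m k k' x h h'
    have hp := parent_subset (m + d) k
    exact le_trans hp (ih m (fun i => k i / 2) k' x (hp h) h')

lemma subset_of_mem {m m' : ℕ} {k k' : Fin n → ℕ} {x : Fin n → ℝ} (hmm : m' ≤ m)
    (h : x ∈ dyadicCube n m k) (h' : x ∈ dyadicCube n m' k') :
    dyadicCube n m k ⊆ dyadicCube n m' k' := by
  obtain ⟨d, rfl⟩ := Nat.exists_eq_add_of_le hmm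
  exact subset_of_mem_aux d m' k k' x h h'


noncomputable def ctr (n m : ℕ) (k : Fin n → ℕ) : Fin n → ℝ :=
  fun i => -(1 / 2 : ℝ) + (k i + 1 / 2) / 2 ^ m

noncomputable def rad (m : ℕ) : ℝ := (1 / 2) / 2 ^ m
lemma rad_pos (m : ℕ) : 0 < rad m := by unfold rad; positivity

lemma cube_subset_closedBall (m : ℕ) (k : Fin n → ℕ) :
    dyadicCube n m k ⊆ closedBall (ctr n m k) (rad m) := by
  intro y hy
  rw [mem_closedBall, dist_pi_le_iff (rad_pos m).le]
  intro i
  obtain ⟨hl, hu⟩ := hy i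
  rw [Real.dist_eq, abs_le]
  have hp : (0:ℝ) < 2 ^ m := by positivity
  have h1 : ((k i : ℝ) + 1 / 2) / 2 ^ m - rad m = (k i : ℝ) / 2 ^ m := by
    unfold rad; field_simp; ring
  have h2 : ((k i : ℝ) + 1 / 2) / 2 ^ m + rad m = ((k i : ℝ) + 1) / 2 ^ m := by
    unfold rad; field_simp; ring
  unfold ctr
  constructor
  · nlinarith [h1]
  · nlinarith [h2]

lemma volume_closedBall_eq (m : ℕ) (k : Fin n → ℕ) :
    volume (closedBall (ctr n m k) (rad m)) = volume (dyadicCube n m k) := by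
  rw [closedBall_pi _ (rad_pos m).le, volume_cube, volume_pi_pi]
  have : ∀ i : Fin n, volume (closedBall (ctr n m k i) (rad m)) =
      ENNReal.ofReal ((1:ℝ) / 2 ^ m) := by
    intro i
    rw [Real.closedBall_eq_Icc, Real.volume_Icc]
    congr 1
    unfold rad
    ring
  rw [Finset.prod_congr rfl (fun i _ => this i), Finset.prod_const]
  simp

lemma closedBall_diff_cube_null (m : ℕ) (k : Fin n → ℕ) :
    volume (closedBall (ctr n m k) (rad m) \ dyadicCube n m k) = 0 := by
  have hsub : closedBall (ctr n m k) (rad m) \ dyadicCube n m k ⊆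
      ⋃ i : Fin n, {y : Fin n → ℝ | y i = -(1 / 2 : ℝ) + (k i + 1) / 2 ^ m} := by
    rintro y ⟨hyb, hyc⟩
    rw [mem_closedBall, dist_pi_le_iff (rad_pos m).le] at hyb
    simp only [dyadicCube, mem_setOf_eq, not_forall] at hyc
    obtain ⟨i, hi⟩ := hyc
    have hb := hyb i
    rw [Real.dist_eq, abs_le] at hb
    have hp : (0:ℝ) < 2 ^ m := by positivity
    have h1 : ((k i : ℝ) + 1 / 2) / 2 ^ m - rad m = (k i : ℝ) / 2 ^ m := by
      unfold rad; field_simp; ring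
    have h2 : ((k i : ℝ) + 1 / 2) / 2 ^ m + rad m = ((k i : ℝ) + 1) / 2 ^ m := by
      unfold rad; field_simp; ring
    have hlo : -(1/2 : ℝ) + k i / 2 ^ m ≤ y i := by
      have := hb.1; unfold ctr at this; nlinarith [h1]
    have hhi : y i ≤ -(1/2 : ℝ) + (k i + 1) / 2 ^ m := by
      have := hb.2; unfold ctr at this; nlinarith [h2]
    refine mem_iUnion.2 ⟨i, ?_⟩
    simp only [mem_setOf_eq]
    have hq : ¬ y i < -(1/2 : ℝ) + (k i + 1) / 2 ^ m := fun hq => hi ⟨hlo, hq⟩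
    linarith [not_lt.mp hq]
  refine measure_mono_null hsub ?_
  refine measure_iUnion_null fun i => ?_
  have : {y : Fin n → ℝ | y i = -(1 / 2 : ℝ) + (k i + 1) / 2 ^ m} =
      {f : Fin n → ℝ | f i = -(1 / 2 : ℝ) + (k i + 1) / 2 ^ m} := rfl
  rw [this, MeasureTheory.volume_pi]
  exact Measure.pi_hyperplane _ i _

lemma inter_closedBall_eq (S : Set (Fin n → ℝ)) (m : ℕ) (k : Fin n → ℕ) :
    volume (S ∩ closedBall (ctr n m k) (rad m)) = volume (S ∩ dyadicCube n m k) := by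
  apply le_antisymm
  · calc volume (S ∩ closedBall (ctr n m k) (rad m)) ≤
        volume ((S ∩ dyadicCube n m k) ∪ (closedBall (ctr n m k) (rad m) \ dyadicCube n m k)) := by
          apply measure_mono
          rintro y ⟨hyS, hyb⟩
          by_cases hyc : y ∈ dyadicCube n m k
          · exact Or.inl ⟨hyS, hyc⟩
          · exact Or.inr ⟨hyb, hyc⟩
    _ ≤ volume (S ∩ dyadicCube n m k) + volume (closedBall (ctr n m k) (rad m) \ dyadicCube n m k) :=
        measure_union_le _ _
    _ = volume (S ∩ dyadicCube n m k) := by rw [closedBall_diff_cube_null, add_zero]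
  · exact measure_mono (inter_subset_inter_right _ (cube_subset_closedBall m k))

lemma density (A : Set (Fin n → ℝ)) :
    ∀ᵐ x ∂(volume.restrict A), x ∈ dyadicCube n 0 0 →
      Tendsto (fun m => volume (A ∩ dyadicCube n m (idx n m x)) /
        volume (dyadicCube n m (idx n m x))) atTop (nhds 1) := by
  filter_upwards [IsUnifLocDoublingMeasure.ae_tendsto_measure_inter_div volume A 1] with x hx hxQ
  have δlim : Tendsto (fun m : ℕ => rad m) atTop (nhdsWithin 0 (Set.Ioi 0)) := by
    apply tendsto_nhdsWithin_of_tendsto_nhds_of_eventually_within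
    · have h0 : Tendsto (fun m : ℕ => ((1:ℝ)/2) ^ m) atTop (nhds 0) :=
        tendsto_pow_atTop_nhds_zero_of_lt_one (by norm_num) (by norm_num)
      have := h0.const_mul ((1:ℝ)/2)
      simp only [mul_zero] at this
      convert this using 2 with m
      unfold rad
      rw [one_div_pow]
      ring
    · exact Eventually.of_forall fun m => rad_pos m
  have xmem : ∀ᶠ m : ℕ in atTop, x ∈ closedBall (ctr n m (idx n m x)) (1 * rad m) := by
    refine Eventually.of_forall fun m => ?_
    rw [one_mul]
    exact cube_subset_closedBall m _ (mem_cube_idx hxQ m)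
  have h := hx (fun m => ctr n m (idx n m x)) (fun m => rad m) δlim xmem
  refine h.congr fun m => ?_
  rw [inter_closedBall_eq, volume_closedBall_eq]


lemma cz_core (n : ℕ) (δ : ENNReal) (hδ1 : δ < 1) (A B : Set (Fin n → ℝ))
    (hA : MeasurableSet A) (hAQ : A ⊆ dyadicCube n 0 0)
    (hsmall : volume A ≤ δ * volume (dyadicCube n 0 0))
    (hbad : ∀ (m : ℕ) (k : Fin n → ℕ), 1 ≤ m → (∀ i, k i < 2 ^ m) →
      δ * volume (dyadicCube n m k) < volume (A ∩ dyadicCube n m k) →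
      dyadicCube n (m - 1) (fun i => k i / 2) ⊆ B) :
    volume A ≤ δ * volume B := by
  classical
  set Bad : ℕ → (Fin n → ℕ) → Prop := fun m k =>
    δ * volume (dyadicCube n m k) < volume (A ∩ dyadicCube n m k) with hBad
  set P : Set (ℕ × (Fin n → ℕ)) := {p | ∃ x ∈ dyadicCube n 0 0,
    p.2 = idx n p.1 x ∧ Bad (p.1 + 1) (idx n (p.1 + 1) x) ∧
      ∀ j < p.1, ¬ Bad (j + 1) (idx n (j + 1) x)} with hPdef
  set G : Set (ℕ × (Fin n → ℕ)) := {p | p ∈ P ∧ ∀ q ∈ P, q.1 < p.1 →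
    ¬ dyadicCube n p.1 p.2 ⊆ dyadicCube n q.1 q.2} with hGdef
  -- every P-cube is not bad and is contained in B
  have hPnotbad : ∀ p ∈ P, ¬ Bad p.1 p.2 := by
    rintro ⟨m, k⟩ ⟨x, hxQ, hk, hbadc, hmin⟩
    dsimp only at hk hbadc hmin
    subst hk
    cases m with
    | zero =>
      have hidx : idx n 0 x = fun _ => 0 := by
        funext i
        have := idx_lt hxQ 0 i
        omega
      rw [hidx]
      have hQ : dyadicCube n 0 (fun _ => (0:ℕ)) = dyadicCube n 0 (0 : Fin n → ℕ) := rfl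
      rw [hBad]
      simp only [hQ]
      rw [Set.inter_eq_left.mpr hAQ] at *
      exact not_lt.mpr hsmall
    | succ m => exact hmin m (Nat.lt_succ_self m)
  have hPsubB : ∀ p ∈ P, dyadicCube n p.1 p.2 ⊆ B := by
    rintro ⟨m, k⟩ ⟨x, hxQ, hk, hbadc, hmin⟩
    dsimp only at hk hbadc hmin ⊢
    subst hk
    have h1 := hbad (m + 1) (idx n (m + 1) x) (Nat.le_add_left 1 m) (idx_lt hxQ (m + 1))
      hbadc
    simp only [Nat.add_sub_cancel] at h1
    have heq : dyadicCube n m (fun i => idx n (m + 1) x i / 2) =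
        dyadicCube n m (idx n m x) :=
      cube_eq_of_mem (parent_subset m _ (mem_cube_idx hxQ (m + 1))) (mem_cube_idx hxQ m)
    rwa [heq] at h1
  have hPvalid : ∀ p ∈ P, ∀ i, p.2 i < 2 ^ p.1 := by
    rintro ⟨m, k⟩ ⟨x, hxQ, hk, -, -⟩ i
    dsimp only at hk ⊢
    subst hk
    exact idx_lt hxQ m i
  -- coverage by maximal cubes
  have hcover : ∀ x ∈ dyadicCube n 0 0, (∃ m : ℕ, Bad (m + 1) (idx n (m + 1) x)) →
      x ∈ ⋃ p ∈ G, dyadicCube n p.1 p.2 := by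
    intro x hxQ hex
    have hm₀ := Nat.find_spec hex
    set m₀ := Nat.find hex with hm₀def
    have hp₀ : (m₀, idx n m₀ x) ∈ P :=
      ⟨x, hxQ, rfl, hm₀, fun j hj => Nat.find_min hex hj⟩
    have hJ : ∃ j : ℕ, ∃ q ∈ P, q.1 = j ∧
        dyadicCube n m₀ (idx n m₀ x) ⊆ dyadicCube n q.1 q.2 :=
      ⟨m₀, (m₀, idx n m₀ x), hp₀, rfl, subset_rfl⟩
    obtain ⟨q, hqP, hq1, hqsub⟩ := Nat.find_spec hJ
    refine mem_iUnion₂.2 ⟨q, ⟨hqP, ?_⟩, hqsub (mem_cube_idx hxQ m₀)⟩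
    intro r hrP hr1 hrsub
    exact Nat.find_min hJ (hq1 ▸ hr1) ⟨r, hrP, rfl, hqsub.trans hrsub⟩
  -- maximal cubes are pairwise disjoint
  have hdisj : G.PairwiseDisjoint (fun p => dyadicCube n p.1 p.2) := by
    rintro p hp q hq hne
    rw [Function.onFun]
    by_contra hnd
    obtain ⟨x, hxp, hxq⟩ := Set.not_disjoint_iff.1 hnd
    apply hne
    rcases le_total q.1 p.1 with h | h
    · rcases lt_or_eq_of_le h with h' | h'
      · exact absurd (subset_of_mem h hxp hxq) (hp.2 q hq.1 h') |> False.elim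
      · obtain ⟨xp, hxpQ, hkp, -, -⟩ := hp.1
        obtain ⟨xq, hxqQ, hkq, -, -⟩ := hq.1
        have : p.2 = q.2 := by
          rw [idx_unique hxp, idx_unique hxq, h']
        exact Prod.ext h'.symm this
    · rcases lt_or_eq_of_le h with h' | h'
      · exact absurd (subset_of_mem h hxq hxp) (hq.2 p hp.1 h') |> False.elim
      · have : p.2 = q.2 := by
          rw [idx_unique hxp, idx_unique hxq, h']
        exact Prod.ext h' this
  -- a.e. coverage
  set U : Set (Fin n → ℝ) := ⋃ p ∈ G, dyadicCube n p.1 p.2 with hUdef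
  have hnull : volume (A \ U) = 0 := by
    have hae : ∀ᵐ x ∂(volume.restrict A), x ∈ dyadicCube n 0 0 →
        ∃ m : ℕ, Bad (m + 1) (idx n (m + 1) x) := by
      filter_upwards [density A] with x hx hxQ
      have ht := hx hxQ
      have hev : ∀ᶠ m : ℕ in atTop,
          δ < volume (A ∩ dyadicCube n m (idx n m x)) /
            volume (dyadicCube n m (idx n m x)) :=
        ht.eventually (eventually_gt_nhds hδ1)
      obtain ⟨m₁, hm₁⟩ := eventually_atTop.1 hev
      refine ⟨m₁, ?_⟩
      have := hm₁ (m₁ + 1) (Nat.le_succ m₁)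
      rw [ENNReal.lt_div_iff_mul_lt (Or.inl (volume_cube_ne_zero _ _))
        (Or.inl (volume_cube_ne_top _ _))] at this
      exact this
    have hsub : A \ U ⊆ {x | ¬ (x ∈ dyadicCube n 0 0 →
        ∃ m : ℕ, Bad (m + 1) (idx n (m + 1) x))} ∩ A := by
      rintro x ⟨hxA, hxU⟩
      refine ⟨fun hP => hxU (hcover x (hAQ hxA) (hP (hAQ hxA))), hxA⟩
    refine measure_mono_null hsub ?_
    rw [← Measure.restrict_apply' hA]
    exact hae
  have hcnt : G.Countable := Set.to_countable G
  have hGsubB : ∀ p ∈ G, dyadicCube n p.1 p.2 ⊆ B := fun p hp => hPsubB p hp.1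
  calc volume A ≤ volume (A ∩ U) + volume (A \ U) := measure_le_inter_add_diff _ _ _
    _ = volume (A ∩ U) := by rw [hnull, add_zero]
    _ = volume (⋃ p ∈ G, (A ∩ dyadicCube n p.1 p.2)) := by rw [hUdef, inter_iUnion₂]
    _ = ∑' p : G, volume (A ∩ dyadicCube n p.1.1 p.1.2) := by
        refine measure_biUnion hcnt ?_ fun p hp => hA.inter (measurableSet_cube _ _)
        exact fun p hp q hq hne =>
          (hdisj hp hq hne).mono inter_subset_right inter_subset_right
    _ ≤ ∑' p : G, δ * volume (dyadicCube n p.1.1 p.1.2) := by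
        refine ENNReal.tsum_le_tsum fun p => ?_
        exact not_lt.mp (hPnotbad p.1 p.2.1)
    _ = δ * ∑' p : G, volume (dyadicCube n p.1.1 p.1.2) := ENNReal.tsum_mul_left
    _ = δ * volume U := by
        rw [hUdef, measure_biUnion hcnt hdisj fun p hp => measurableSet_cube _ _]
    _ ≤ δ * volume B := by
        refine mul_le_mul_right (measure_mono ?_) δ
        exact iUnion₂_subset hGsubB

lemma volume_Q1 {n : ℕ} : volume (dyadicCube n 0 0) = 1 := by
  rw [volume_cube]; norm_num

end CZAux

theorem stmt_6 (n : ℕ) (hn : 1 ≤ n) (μ ε : ℝ) (hμ : 0 < μ) (hε : 0 < ε) (hμε : μ * ε < 1)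
    (M : ℝ) (hM : 1 < M) (v : (Fin n → ℝ) → ℝ) (hmeas : Measurable v)
    (hnonneg : ∀ x ∈ dyadicCube n 0 0, 0 ≤ v x)
    (hdyadic : ∀ (m : ℕ) (kk : Fin n → ℕ), 1 ≤ m → (∀ i, kk i < 2 ^ m) →
      ∀ k : ℕ, 1 ≤ k →
        (∃ xt ∈ dyadicCube n (m - 1) (fun i => kk i / 2), v xt ≤ M ^ (k - 1)) →
        ENNReal.ofReal (μ * ε) * volume (dyadicCube n m kk) <
          volume ({x | v x ≤ M ^ k} ∩ dyadicCube n m kk))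
    (hbase : ENNReal.ofReal (μ * ε) < volume ({x | v x ≤ M} ∩ dyadicCube n 0 0)) :
    ∀ k : ℕ, 1 ≤ k →
      volume ({x | M ^ k < v x} ∩ dyadicCube n 0 0) ≤ ENNReal.ofReal ((1 - μ * ε) ^ k) := by
  classical
  set δ : ENNReal := ENNReal.ofReal (1 - μ * ε) with hδdef
  have hμε0 : 0 < μ * ε := mul_pos hμ hε
  have hδr0 : (0:ℝ) ≤ 1 - μ * ε := by linarith
  have hδ1 : δ < 1 := by
    rw [hδdef, ← ENNReal.ofReal_one]
    exact (ENNReal.ofReal_lt_ofReal_iff one_pos).mpr (by linarith)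
  set W : ℕ → Set (Fin n → ℝ) := fun k => {x | M ^ k < v x} ∩ dyadicCube n 0 0 with hWdef
  have hWmeas : ∀ k, MeasurableSet (W k) :=
    fun k => (measurableSet_lt measurable_const hmeas).inter (CZAux.measurableSet_cube 0 0)
  have hWsub1 : ∀ k, 1 ≤ k → W k ⊆ W 1 := by
    intro k hk x hx
    refine ⟨?_, hx.2⟩
    have h1 : M ^ 1 ≤ M ^ k := pow_le_pow_right₀ hM.le hk
    have := hx.1
    simp only [Set.mem_setOf_eq, pow_one] at *
    linarith
  -- volume of W 1
  have hW1 : volume (W 1) ≤ δ := by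
    have hWeq : W 1 = dyadicCube n 0 0 \ ({x | v x ≤ M} ∩ dyadicCube n 0 0) := by
      ext x
      simp only [hWdef, Set.mem_inter_iff, Set.mem_setOf_eq, Set.mem_diff, pow_one]
      constructor
      · rintro ⟨h1, h2⟩
        exact ⟨h2, fun h => absurd h.1 (not_le.mpr h1)⟩
      · rintro ⟨h2, h3⟩
        exact ⟨not_le.mp (fun hle => h3 ⟨hle, h2⟩), h2⟩
    have hSsub : {x | v x ≤ M} ∩ dyadicCube n 0 0 ⊆ dyadicCube n 0 0 := Set.inter_subset_right
    have hSmeas : MeasurableSet ({x | v x ≤ M} ∩ dyadicCube n 0 0) :=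
      (measurableSet_le hmeas measurable_const).inter (CZAux.measurableSet_cube 0 0)
    rw [hWeq, measure_diff hSsub hSmeas.nullMeasurableSet
      (ne_top_of_le_ne_top (CZAux.volume_cube_ne_top 0 0) (measure_mono hSsub)),
      CZAux.volume_Q1]
    calc (1:ENNReal) - volume ({x | v x ≤ M} ∩ dyadicCube n 0 0)
        ≤ 1 - ENNReal.ofReal (μ * ε) := tsub_le_tsub_left hbase.le 1
      _ = δ := by
          rw [hδdef, ← ENNReal.ofReal_one, ← ENNReal.ofReal_sub _ hμε0.le]
  -- the inductive step via cz_core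
  have hstep : ∀ k : ℕ, 1 ≤ k → volume (W (k + 1)) ≤ δ * volume (W k) := by
    intro k hk
    refine CZAux.cz_core n δ hδ1 (W (k + 1)) (W k) (hWmeas _) Set.inter_subset_right ?_ ?_
    · rw [CZAux.volume_Q1, mul_one]
      exact le_trans (measure_mono (hWsub1 (k + 1) (by omega))) hW1
    · intro m kk hm hkk hBad
      by_contra hnsub
      rw [Set.not_subset] at hnsub
      obtain ⟨xt, hxt, hxtW⟩ := hnsub
      -- xt lies in Q₁
      have hpredvalid : ∀ i, kk i / 2 < 2 ^ (m - 1) := by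
        intro i
        have h2 : 2 ^ m = 2 * 2 ^ (m - 1) := by
          conv_lhs => rw [show m = (m - 1) + 1 by omega]
          rw [pow_succ']
        have := hkk i
        omega
      have hxtQ : xt ∈ dyadicCube n 0 0 := CZAux.subset_Q1 hpredvalid hxt
      have hxtv : v xt ≤ M ^ k := by
        by_contra hv
        exact hxtW ⟨not_le.mp hv, hxtQ⟩
      -- apply hdyadic to get large measure of the complement
      have h1 := hdyadic m kk hm hkk (k + 1) (by omega)
        ⟨xt, hxt, by simpa [Nat.add_sub_cancel] using hxtv⟩
      -- W (k+1) ∩ Q = {M^(k+1) < v} ∩ Q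
      have hQsub : dyadicCube n m kk ⊆ dyadicCube n 0 0 := CZAux.subset_Q1 hkk
      have hWQ : W (k + 1) ∩ dyadicCube n m kk =
          {x | M ^ (k + 1) < v x} ∩ dyadicCube n m kk := by
        ext x
        simp only [hWdef, Set.mem_inter_iff, Set.mem_setOf_eq]
        exact ⟨fun h => ⟨h.1.1, h.2⟩, fun h => ⟨⟨h.1, hQsub h.2⟩, h.2⟩⟩
      rw [hWQ] at hBad
      -- partition of the cube
      have hpart : volume ({x | v x ≤ M ^ (k + 1)} ∩ dyadicCube n m kk) +
          volume ({x | M ^ (k + 1) < v x} ∩ dyadicCube n m kk) =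
          volume (dyadicCube n m kk) := by
        rw [← measure_union]
        · congr 1
          ext x
          simp only [Set.mem_union, Set.mem_inter_iff, Set.mem_setOf_eq]
          constructor
          · rintro (⟨-, h⟩ | ⟨-, h⟩) <;> exact h
          · intro h
            by_cases hv : v x ≤ M ^ (k + 1)
            · exact Or.inl ⟨hv, h⟩
            · exact Or.inr ⟨not_le.mp hv, h⟩
        · rw [Set.disjoint_left]
          rintro x ⟨hx1, -⟩ ⟨hx2, -⟩
          simp only [Set.mem_setOf_eq] at hx1 hx2
          exact absurd hx1 (not_le.mpr hx2)
        · exact (measurableSet_lt measurable_const hmeas).inter (CZAux.measurableSet_cube _ _)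
      have hsum := ENNReal.add_lt_add h1 hBad
      rw [hpart, ← add_mul] at hsum
      have hone : ENNReal.ofReal (μ * ε) + δ = 1 := by
        rw [hδdef, ← ENNReal.ofReal_add hμε0.le hδr0, ← ENNReal.ofReal_one]
        congr 1
        ring
      rw [hone, one_mul] at hsum
      exact lt_irrefl _ hsum
  -- iterate
  have hiter : ∀ j : ℕ, volume (W (j + 1)) ≤ ENNReal.ofReal ((1 - μ * ε) ^ (j + 1)) := by
    intro j
    induction j with
    | zero => simpa [pow_one] using hW1
    | succ j ih =>
      calc volume (W (j + 2)) ≤ δ * volume (W (j + 1)) := hstep (j + 1) (by omega)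
        _ ≤ δ * ENNReal.ofReal ((1 - μ * ε) ^ (j + 1)) := mul_le_mul_right ih δ
        _ = ENNReal.ofReal ((1 - μ * ε) ^ (j + 2)) := by
            rw [hδdef, ← ENNReal.ofReal_mul hδr0]
            congr 1
            ring
  intro k hk
  obtain ⟨j, rfl⟩ : ∃ j, k = j + 1 := ⟨k - 1, by omega⟩
  exact hiter j
end
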